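/- arXiv:1706.05767 — 4 statements merged into one kernel-verified Lean document; each statement's English description precedes it below -/
import Mathlib

section
/- Distributivity of the Zykov product over the Zykov join: for finite simple graphs G on V, H on W, and K on U, the graph G · (H + K) is isomorphic to (G · H) + (G · K), via the canonical bijection between V × (W ⊕ U) and (V × W) ⊕ (V × U). -/
variable {V W U : Type*}

/-- The Zykov join of two simple graphs: vertices in the same summand are adjacent
iff they are adjacent in the corresponding graph; vertices in different summands
are always adjacent. -/
def zykovJoin (G : SimpleGraph V) (H : SimpleGraph W) : SimpleGraph (V ⊕ W) where
  Adj x y :=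
    match x, y with
    | Sum.inl a, Sum.inl b => G.Adj a b
    | Sum.inr a, Sum.inr b => H.Adj a b
    | Sum.inl _, Sum.inr _ => True
    | Sum.inr _, Sum.inl _ => True
  symm := by
    constructor
    rintro (a | a) (b | b) h
    · exact h.symm
    · trivial
    · trivial
    · exact h.symm
  loopless := by
    constructor
    rintro (a | a) h
    · exact G.loopless.irrefl a h
    · exact H.loopless.irrefl a h

/-- The disjoint union of two simple graphs: vertices are adjacent iff they lie in
the same summand and are adjacent there. -/
def disjUnion (G : SimpleGraph V) (H : SimpleGraph W) : SimpleGraph (V ⊕ W) where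
  Adj x y :=
    match x, y with
    | Sum.inl a, Sum.inl b => G.Adj a b
    | Sum.inr a, Sum.inr b => H.Adj a b
    | Sum.inl _, Sum.inr _ => False
    | Sum.inr _, Sum.inl _ => False
  symm := by
    constructor
    rintro (a | a) (b | b) h
    · exact h.symm
    · exact h.elim
    · exact h.elim
    · exact h.symm
  loopless := by
    constructor
    rintro (a | a) h
    · exact G.loopless.irrefl a h
    · exact H.loopless.irrefl a h

/-- The Zykov product: distinct vertices `(a,b)`, `(c,d)` are adjacent iff
`a ~ c` in `G` or `b ~ d` in `H`. -/
def zykovProd (G : SimpleGraph V) (H : SimpleGraph W) : SimpleGraph (V × W) where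
  Adj x y := x ≠ y ∧ (G.Adj x.1 y.1 ∨ H.Adj x.2 y.2)
  symm := by
    constructor
    rintro x y ⟨hxy, h⟩
    exact ⟨hxy.symm, h.imp SimpleGraph.Adj.symm SimpleGraph.Adj.symm⟩
  loopless := by constructor; rintro x ⟨hx, -⟩; exact hx rfl

/-- The strong product: `(a,b)` and `(c,d)` are adjacent iff (`a = c` and `b ~ d`) or
(`b = d` and `a ~ c`) or (`a ~ c` and `b ~ d`). -/
def strongProd (G : SimpleGraph V) (H : SimpleGraph W) : SimpleGraph (V × W) where
  Adj x y := (x.1 = y.1 ∧ H.Adj x.2 y.2) ∨ (x.2 = y.2 ∧ G.Adj x.1 y.1) ∨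
    (G.Adj x.1 y.1 ∧ H.Adj x.2 y.2)
  symm := by
    constructor
    rintro x y (⟨h1, h2⟩ | ⟨h1, h2⟩ | ⟨h1, h2⟩)
    · exact Or.inl ⟨h1.symm, h2.symm⟩
    · exact Or.inr (Or.inl ⟨h1.symm, h2.symm⟩)
    · exact Or.inr (Or.inr ⟨h1.symm, h2.symm⟩)
  loopless := by
    constructor
    rintro x (⟨-, h⟩ | ⟨-, h⟩ | ⟨h, -⟩) <;> exact h.ne rfl

/-- The number of `n`-cliques of a graph. -/
noncomputable def cliqueCount (G : SimpleGraph V) (n : ℕ) : ℕ :=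
  Set.ncard {s : Finset V | G.IsNClique n s}

/-- The Euler characteristic of a finite simple graph:
`χ(G) = Σ_{n=1}^{|V|} (-1)^(n+1) v_{n-1}(G)` where `v_{n-1}(G)` is the number of
`n`-cliques of `G`. -/
noncomputable def eulerChar (G : SimpleGraph V) [Fintype V] : ℤ :=
  ∑ n ∈ Finset.Icc 1 (Fintype.card V), (-1 : ℤ) ^ (n + 1) * cliqueCount G n

namespace SimpleGraph

variable (G : SimpleGraph V) (H : SimpleGraph W) (K : SimpleGraph U)

theorem zykovProd_adj {x y : V × W} :
    (zykovProd G H).Adj x y ↔ x ≠ y ∧ (G.Adj x.1 y.1 ∨ H.Adj x.2 y.2) :=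
  Iff.rfl

@[simp]
theorem zykovJoin_adj_inl_inl {a b : V} : (zykovJoin G H).Adj (.inl a) (.inl b) ↔ G.Adj a b :=
  Iff.rfl

@[simp]
theorem zykovJoin_adj_inr_inr {a b : W} : (zykovJoin G H).Adj (.inr a) (.inr b) ↔ H.Adj a b :=
  Iff.rfl

theorem zykovJoin_adj_inl_inr (a : V) (b : W) : (zykovJoin G H).Adj (.inl a) (.inr b) :=
  trivial

theorem zykovProd_zykovJoin_adj_inl_inl {a c : V} {b d : W} :
    (zykovProd G (zykovJoin H K)).Adj (a, .inl b) (c, .inl d) ↔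
      (zykovProd G H).Adj (a, b) (c, d) := by
  simp [zykovProd_adj, Prod.ext_iff]

theorem zykovProd_zykovJoin_adj_inr_inr {a c : V} {b d : U} :
    (zykovProd G (zykovJoin H K)).Adj (a, .inr b) (c, .inr d) ↔
      (zykovProd G K).Adj (a, b) (c, d) := by
  simp [zykovProd_adj, Prod.ext_iff]

theorem zykovProd_zykovJoin_adj_inl_inr (a c : V) (b : W) (d : U) :
    (zykovProd G (zykovJoin H K)).Adj (a, .inl b) (c, .inr d) :=
  ⟨by simp, .inr (zykovJoin_adj_inl_inr H K b d)⟩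

def zykovProdZykovJoinIso :
    zykovProd G (zykovJoin H K) ≃g zykovJoin (zykovProd G H) (zykovProd G K) where
  toEquiv := Equiv.prodSumDistrib V W U
  map_rel_iff' {x y} := by
    rcases x with ⟨a, b | b⟩ <;> rcases y with ⟨c, d | d⟩
    · exact (zykovProd_zykovJoin_adj_inl_inl G H K).symm
    · exact iff_of_true (zykovJoin_adj_inl_inr _ _ _ _)
        (zykovProd_zykovJoin_adj_inl_inr G H K a c b d)
    · exact iff_of_true (zykovJoin_adj_inl_inr _ _ _ _).symm
        (zykovProd_zykovJoin_adj_inl_inr G H K c a d b).symm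
    · exact (zykovProd_zykovJoin_adj_inr_inr G H K).symm

end SimpleGraph

theorem zykovProd_zykovJoin_distrib_general
    (G : SimpleGraph V) (H : SimpleGraph W) (K : SimpleGraph U) :
    ∀ x y : V × (W ⊕ U),
      (zykovProd G (zykovJoin H K)).Adj x y ↔
      (zykovJoin (zykovProd G H) (zykovProd G K)).Adj
        (Equiv.prodSumDistrib V W U x) (Equiv.prodSumDistrib V W U y) :=
  fun _ _ => (SimpleGraph.zykovProdZykovJoinIso G H K).map_adj_iff.symm

/-- Distributivity of the Zykov product over the Zykov join, via the
canonical bijection `V × (W ⊕ U) ≃ (V × W) ⊕ (V × U)`. -/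
theorem zykovProd_zykovJoin_distrib [Fintype V] [Fintype W] [Fintype U]
    (G : SimpleGraph V) (H : SimpleGraph W) (K : SimpleGraph U) :
    ∀ x y : V × (W ⊕ U),
      (zykovProd G (zykovJoin H K)).Adj x y ↔
      (zykovJoin (zykovProd G H) (zykovProd G K)).Adj
        (Equiv.prodSumDistrib V W U x) (Equiv.prodSumDistrib V W U y) :=
  zykovProd_zykovJoin_distrib_general G H K
end

section
/- For finite simple graphs G and H, the reduced quantity i(G) = 1 − χ(G) is multiplicative under the Zykov join: 1 − χ(G + H) = (1 − χ(G)) · (1 − χ(H)). Equivalently, χ(G + H) = χ(G) + χ(H) − χ(G)·χ(H). -/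
variable {V W U : Type*}

/-!
Counting the empty clique, `1 - χ(G)` is the signed clique count `∑ (-1) ^ |s|` over all cliques
`s` of `G`. The cliques of `G + H` are exactly the disjoint unions of a clique of `G` and a clique
of `H`, and the sign `(-1) ^ |s|` is multiplicative in this decomposition.
-/

open Finset

namespace SimpleGraph

theorem isClique_zykovJoin_iff {G : SimpleGraph V} {H : SimpleGraph W} {S : Set (V ⊕ W)} :
    (zykovJoin G H).IsClique S ↔
      G.IsClique (Sum.inl ⁻¹' S) ∧ H.IsClique (Sum.inr ⁻¹' S) := by
  refine ⟨fun hS => ⟨fun a ha b hb hab => hS ha hb (by simpa),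
    fun a ha b hb hab => hS ha hb (by simpa)⟩, fun ⟨hG, hH⟩ => ?_⟩
  rintro (a | a) ha (b | b) hb hab
  · exact hG ha hb (by simpa using hab)
  · trivial
  · trivial
  · exact hH ha hb (by simpa using hab)

theorem isClique_zykovJoin_disjSum {G : SimpleGraph V} {H : SimpleGraph W}
    {s : Finset V} {t : Finset W} :
    (zykovJoin G H).IsClique (s.disjSum t : Set (V ⊕ W)) ↔
      G.IsClique (s : Set V) ∧ H.IsClique (t : Set W) := by
  have hl : Sum.inl ⁻¹' (s.disjSum t : Set (V ⊕ W)) = s := by ext; simp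
  have hr : Sum.inr ⁻¹' (s.disjSum t : Set (V ⊕ W)) = t := by ext; simp
  rw [isClique_zykovJoin_iff, hl, hr]

end SimpleGraph

theorem cliqueCount_zero (G : SimpleGraph V) : cliqueCount G 0 = 1 := by
  rw [cliqueCount, ← SimpleGraph.cliqueSet, SimpleGraph.cliqueSet_zero, Set.ncard_singleton]

section Fintype

variable [Fintype V] [DecidableEq V] (G : SimpleGraph V) [DecidableRel G.Adj]

theorem cliqueCount_eq_card_cliqueFinset (n : ℕ) : cliqueCount G n = #(G.cliqueFinset n) := by
  rw [cliqueCount, ← Set.ncard_coe_finset, SimpleGraph.coe_cliqueFinset, SimpleGraph.cliqueSet]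

theorem sum_isClique_neg_one_pow_card :
    ∑ s ∈ univ.filter fun s : Finset V => G.IsClique (s : Set V), (-1 : ℤ) ^ #s =
      ∑ n ∈ Icc 0 (Fintype.card V), (-1 : ℤ) ^ n * cliqueCount G n := by
  rw [← sum_fiberwise_of_maps_to (g := card) (t := Icc 0 (Fintype.card V))
    (fun s _ => mem_Icc.2 ⟨Nat.zero_le _, card_le_univ s⟩)]
  refine sum_congr rfl fun n _ => ?_
  have hslice : (univ.filter fun s : Finset V => G.IsClique (s : Set V)).filter (#· = n) =
      G.cliqueFinset n := by
    ext s
    simp [SimpleGraph.isNClique_iff]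
  rw [hslice, sum_congr rfl fun s hs => by rw [(SimpleGraph.mem_cliqueFinset_iff.1 hs).card_eq],
    sum_const, cliqueCount_eq_card_cliqueFinset, nsmul_eq_mul, mul_comm]

theorem one_sub_eulerChar_eq_sum_isClique :
    1 - eulerChar G =
      ∑ s ∈ univ.filter fun s : Finset V => G.IsClique (s : Set V), (-1 : ℤ) ^ #s := by
  rw [sum_isClique_neg_one_pow_card, ← insert_Icc_add_one_left_eq_Icc (Nat.zero_le _),
    sum_insert (by simp), cliqueCount_zero, eulerChar]
  simp [pow_succ, sum_neg_distrib]

end Fintype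

/-- The quantity `i(G) = 1 - χ(G)` is multiplicative under the Zykov
join: `1 - χ(G + H) = (1 - χ(G))·(1 - χ(H))`. -/
theorem one_sub_eulerChar_zykovJoin [Fintype V] [Fintype W]
    (G : SimpleGraph V) (H : SimpleGraph W) :
    1 - eulerChar (zykovJoin G H) = (1 - eulerChar G) * (1 - eulerChar H) := by
  classical
  simp only [one_sub_eulerChar_eq_sum_isClique, sum_filter, sum_mul_sum,
    ← Fintype.sum_prod_type']
  rw [← sumEquiv.symm.toEquiv.sum_comp]
  simp only [OrderIso.toEquiv_symm, OrderIso.coe_symm_toEquiv, sumEquiv_symm_apply,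
    SimpleGraph.isClique_zykovJoin_disjSum, card_disjSum, pow_add, ite_zero_mul_ite_zero]
end

section
/- The Euler characteristic is multiplicative for the strong product: for finite simple graphs G and H, χ(G ⊠ H) = χ(G) · χ(H), where G ⊠ H is the strong product of G and H. -/
variable {V W U : Type*}

/-!
A finite set `S ⊆ V × W` is a clique of `G ⊠ H` exactly when its two projections are cliques of
`G` and `H`. Grouping the nonempty cliques of `G ⊠ H` by their projections `(A, B)`, the
contribution of a pair is minus the signed count of the relations `S ⊆ A × B` projecting onto
both `A` and `B`. Inclusion–exclusion over the rows and columns that `S` misses evaluates that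
count to `-(-1)^(|A| + |B|)`, so each pair contributes `(-1)^(|A|+1) (-1)^(|B|+1)` and the sum
over all pairs factors as `χ(G) χ(H)`.
-/

open Finset

namespace Finset

variable {α β : Type*} [DecidableEq α] [DecidableEq β]

theorem sum_powerset_filter_disjoint_neg_one_pow_card (A X : Finset α) :
    ∑ T ∈ A.powerset with Disjoint T X, (-1 : ℤ) ^ #T = if A ⊆ X then 1 else 0 := by
  have : {T ∈ A.powerset | Disjoint T X} = (A \ X).powerset := by
    ext T
    simp [subset_sdiff]
  simp only [this, sum_powerset_neg_one_pow_card, sdiff_eq_empty_iff_subset]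

theorem sum_powerset_erase_neg_one_pow_card {A : Finset α} (hA : A.Nonempty) :
    ∑ T ∈ A.powerset.erase A, (-1 : ℤ) ^ #T = -(-1) ^ #A := by
  rw [sum_erase_eq_sub (mem_powerset_self A), sum_powerset_neg_one_pow_card_of_nonempty hA,
    zero_sub]

theorem powerset_sdiff_product_sdiff (A T : Finset α) (B U : Finset β) :
    ((A \ T) ×ˢ (B \ U)).powerset =
      {S ∈ (A ×ˢ B).powerset |
        Disjoint T (S.image Prod.fst) ∧ Disjoint U (S.image Prod.snd)} := by
  ext S
  simp only [mem_powerset, mem_filter, subset_iff, mem_product, mem_sdiff, disjoint_left,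
    mem_image]
  grind

theorem inclusion_exclusion_sum_powerset_filter_image_fst_snd (A : Finset α) (B : Finset β) :
    ∑ S ∈ (A ×ˢ B).powerset with S.image Prod.fst = A ∧ S.image Prod.snd = B, (-1 : ℤ) ^ #S =
      ∑ T ∈ A.powerset, ∑ U ∈ B.powerset, (-1 : ℤ) ^ #T * (-1) ^ #U *
        ∑ S ∈ ((A \ T) ×ˢ (B \ U)).powerset, (-1 : ℤ) ^ #S := by
  calc _ = ∑ S ∈ (A ×ˢ B).powerset, (-1 : ℤ) ^ #S *
          ((∑ T ∈ A.powerset with Disjoint T (S.image Prod.fst), (-1 : ℤ) ^ #T) *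
            ∑ U ∈ B.powerset with Disjoint U (S.image Prod.snd), (-1 : ℤ) ^ #U) := by
        rw [sum_filter]
        refine sum_congr rfl fun S hS => ?_
        have hfst : S.image Prod.fst ⊆ A :=
          (image_subset_image (mem_powerset.1 hS)).trans subset_product_image_fst
        have hsnd : S.image Prod.snd ⊆ B :=
          (image_subset_image (mem_powerset.1 hS)).trans subset_product_image_snd
        rw [sum_powerset_filter_disjoint_neg_one_pow_card,
          sum_powerset_filter_disjoint_neg_one_pow_card]
        simp only [Subset.antisymm_iff, hfst, hsnd, true_and]
        rw [ite_and]
        split_ifs <;> simp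
    _ = ∑ S ∈ (A ×ˢ B).powerset, ∑ T ∈ A.powerset, ∑ U ∈ B.powerset,
          if Disjoint T (S.image Prod.fst) ∧ Disjoint U (S.image Prod.snd) then
            (-1 : ℤ) ^ #T * (-1) ^ #U * (-1) ^ #S else 0 := by
        refine sum_congr rfl fun S _ => ?_
        rw [sum_filter, sum_filter, sum_mul_sum, mul_sum]
        refine sum_congr rfl fun T _ => ?_
        rw [mul_sum]
        refine sum_congr rfl fun U _ => ?_
        rw [ite_and]
        split_ifs <;> ring
    _ = _ := by
        rw [sum_comm]
        refine sum_congr rfl fun T _ => ?_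
        rw [sum_comm]
        simp only [powerset_sdiff_product_sdiff, sum_filter, mul_sum, mul_ite, mul_zero]

theorem sum_powerset_sum_powerset_neg_one_pow_card_product_sdiff {A : Finset α} {B : Finset β}
    (hA : A.Nonempty) (hB : B.Nonempty) :
    ∑ T ∈ A.powerset, ∑ U ∈ B.powerset, (-1 : ℤ) ^ #T * (-1) ^ #U *
        ∑ S ∈ ((A \ T) ×ˢ (B \ U)).powerset, (-1 : ℤ) ^ #S =
      -((-1) ^ #A * (-1) ^ #B) := by
  calc _ = ∑ T ∈ A.powerset, ∑ U ∈ B.powerset, (-1 : ℤ) ^ #T * (-1) ^ #U *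
          (1 - (if T ≠ A then 1 else 0) * (if U ≠ B then 1 else 0)) := by
        refine sum_congr rfl fun T hT => sum_congr rfl fun U hU => ?_
        rw [mem_powerset] at hT hU
        simp only [sum_powerset_neg_one_pow_card, product_eq_empty, sdiff_eq_empty_iff_subset,
          hT.ge_iff_eq, hU.ge_iff_eq]
        split_ifs <;> simp_all
    _ = (∑ T ∈ A.powerset, (-1 : ℤ) ^ #T) * (∑ U ∈ B.powerset, (-1 : ℤ) ^ #U) -
          (∑ T ∈ A.powerset.erase A, (-1 : ℤ) ^ #T) * ∑ U ∈ B.powerset.erase B, (-1 : ℤ) ^ #U := by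
        simp only [← filter_ne', sum_filter, sum_mul_sum, ← sum_sub_distrib]
        refine sum_congr rfl fun T _ => sum_congr rfl fun U _ => ?_
        split_ifs <;> ring
    _ = _ := by
        rw [sum_powerset_neg_one_pow_card_of_nonempty hA, sum_powerset_erase_neg_one_pow_card hA,
          sum_powerset_erase_neg_one_pow_card hB]
        ring

theorem sum_powerset_filter_image_fst_snd_neg_one_pow_card {A : Finset α} {B : Finset β}
    (hA : A.Nonempty) (hB : B.Nonempty) :
    ∑ S ∈ (A ×ˢ B).powerset with S.image Prod.fst = A ∧ S.image Prod.snd = B, (-1 : ℤ) ^ #S =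
      -((-1) ^ #A * (-1) ^ #B) := by
  rw [inclusion_exclusion_sum_powerset_filter_image_fst_snd,
    sum_powerset_sum_powerset_neg_one_pow_card_product_sdiff hA hB]

end Finset

namespace SimpleGraph

theorem isClique_image_iff (G : SimpleGraph V) (f : U → V) (s : Set U) :
    G.IsClique (f '' s) ↔ ∀ x ∈ s, ∀ y ∈ s, f x = f y ∨ G.Adj (f x) (f y) := by
  constructor
  · intro h x hx y hy
    by_cases hxy : f x = f y
    · exact Or.inl hxy
    · exact Or.inr (h (Set.mem_image_of_mem f hx) (Set.mem_image_of_mem f hy) hxy)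
  · rintro h _ ⟨x, hx, rfl⟩ _ ⟨y, hy, rfl⟩ hxy
    exact (h x hx y hy).resolve_left hxy

open Classical in
noncomputable def simplices (G : SimpleGraph V) [Fintype V] : Finset (Finset V) :=
  {s | s.Nonempty ∧ G.IsClique (s : Set V)}

theorem mem_simplices {G : SimpleGraph V} [Fintype V] {s : Finset V} :
    s ∈ G.simplices ↔ s.Nonempty ∧ G.IsClique (s : Set V) := by
  simp [simplices]

end SimpleGraph

open SimpleGraph

theorem strongProd_adj {G : SimpleGraph V} {H : SimpleGraph W} {p q : V × W} :
    (strongProd G H).Adj p q ↔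
      p ≠ q ∧ (p.1 = q.1 ∨ G.Adj p.1 q.1) ∧ (p.2 = q.2 ∨ H.Adj p.2 q.2) := by
  constructor
  · rintro (⟨h1, h2⟩ | ⟨h1, h2⟩ | ⟨h1, h2⟩)
    · exact ⟨fun h => h2.ne (congrArg Prod.snd h), Or.inl h1, Or.inr h2⟩
    · exact ⟨fun h => h2.ne (congrArg Prod.fst h), Or.inr h2, Or.inl h1⟩
    · exact ⟨fun h => h1.ne (congrArg Prod.fst h), Or.inr h1, Or.inr h2⟩
  · rintro ⟨hne, h1 | h1, h2 | h2⟩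
    · exact absurd (Prod.ext h1 h2) hne
    · exact Or.inl ⟨h1, h2⟩
    · exact Or.inr (Or.inl ⟨h2, h1⟩)
    · exact Or.inr (Or.inr ⟨h1, h2⟩)

theorem strongProd_isClique_iff {G : SimpleGraph V} {H : SimpleGraph W} {s : Set (V × W)} :
    (strongProd G H).IsClique s ↔ G.IsClique (Prod.fst '' s) ∧ H.IsClique (Prod.snd '' s) := by
  rw [isClique_image_iff, isClique_image_iff, IsClique, Set.Pairwise]
  simp only [strongProd_adj]
  constructor
  · intro h
    have h' : ∀ x ∈ s, ∀ y ∈ s,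
        (x.1 = y.1 ∨ G.Adj x.1 y.1) ∧ (x.2 = y.2 ∨ H.Adj x.2 y.2) := by
      intro x hx y hy
      obtain rfl | hxy := eq_or_ne x y
      · exact ⟨Or.inl rfl, Or.inl rfl⟩
      · exact (h hx hy hxy).2
    exact ⟨fun x hx y hy => (h' x hx y hy).1, fun x hx y hy => (h' x hx y hy).2⟩
  · rintro ⟨hG, hH⟩ x hx y hy hxy
    exact ⟨hxy, hG x hx y hy, hH x hx y hy⟩

theorem mem_simplices_strongProd [Fintype V] [Fintype W] [DecidableEq V] [DecidableEq W]
    {G : SimpleGraph V} {H : SimpleGraph W} {S : Finset (V × W)} :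
    S ∈ (strongProd G H).simplices ↔
      S.image Prod.fst ∈ G.simplices ∧ S.image Prod.snd ∈ H.simplices := by
  simp only [mem_simplices, strongProd_isClique_iff, coe_image, image_nonempty]
  tauto

theorem filter_simplices_strongProd_image_eq [Fintype V] [Fintype W] [DecidableEq V]
    [DecidableEq W] {G : SimpleGraph V} {H : SimpleGraph W} {A : Finset V} {B : Finset W}
    (hA : A ∈ G.simplices) (hB : B ∈ H.simplices) :
    {S ∈ (strongProd G H).simplices | (S.image Prod.fst, S.image Prod.snd) = (A, B)} =
      {S ∈ (A ×ˢ B).powerset | S.image Prod.fst = A ∧ S.image Prod.snd = B} := by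
  ext S
  simp only [mem_filter, mem_simplices_strongProd, mem_powerset, Prod.mk.injEq]
  constructor
  · rintro ⟨-, hS⟩
    exact ⟨hS.1 ▸ hS.2 ▸ subset_product, hS⟩
  · rintro ⟨-, hS⟩
    exact ⟨hS.1 ▸ hS.2 ▸ ⟨hA, hB⟩, hS⟩

theorem cliqueCount_eq_card_cliqueFinset_s7 (G : SimpleGraph V) [Fintype V] [DecidableEq V]
    [DecidableRel G.Adj] (n : ℕ) : cliqueCount G n = #(G.cliqueFinset n) := by
  rw [cliqueCount, ← Set.ncard_coe_finset, coe_cliqueFinset, cliqueSet]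

theorem eulerChar_eq_sum_simplices (G : SimpleGraph V) [Fintype V] :
    eulerChar G = ∑ s ∈ G.simplices, (-1 : ℤ) ^ (#s + 1) := by
  classical
  have hcard : ∀ s ∈ G.simplices, #s ∈ Icc 1 (Fintype.card V) := fun s hs =>
    mem_Icc.2 ⟨(mem_simplices.1 hs).1.card_pos, card_le_univ s⟩
  rw [eulerChar, ← sum_fiberwise_of_maps_to hcard]
  refine sum_congr rfl fun n hn => ?_
  have hfiber : {s ∈ G.simplices | #s = n} = G.cliqueFinset n := by
    ext s
    simp only [mem_filter, mem_simplices, mem_cliqueFinset_iff, isNClique_iff, ← card_pos]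
    constructor
    · rintro ⟨⟨-, h⟩, rfl⟩
      exact ⟨h, rfl⟩
    · rintro ⟨h, rfl⟩
      exact ⟨⟨(mem_Icc.1 hn).1, h⟩, rfl⟩
  rw [hfiber, cliqueCount_eq_card_cliqueFinset_s7, sum_congr rfl fun s hs => by
    rw [(mem_cliqueFinset_iff.1 hs).card_eq], sum_const, nsmul_eq_mul, mul_comm]

/-- The Euler characteristic is multiplicative for the strong
product: `χ(G ⊠ H) = χ(G)·χ(H)`. -/
theorem eulerChar_strongProd [Fintype V] [Fintype W]
    (G : SimpleGraph V) (H : SimpleGraph W) :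
    eulerChar (strongProd G H) = eulerChar G * eulerChar H := by
  classical
  have hproj : ∀ S ∈ (strongProd G H).simplices,
      (S.image Prod.fst, S.image Prod.snd) ∈ G.simplices ×ˢ H.simplices :=
    fun S hS => mem_product.2 (mem_simplices_strongProd.1 hS)
  rw [eulerChar_eq_sum_simplices, eulerChar_eq_sum_simplices, eulerChar_eq_sum_simplices,
    sum_mul_sum, ← sum_product', ← sum_fiberwise_of_maps_to hproj]
  refine sum_congr rfl fun ⟨A, B⟩ hAB => ?_
  obtain ⟨hA, hB⟩ := mem_product.1 hAB
  rw [filter_simplices_strongProd_image_eq hA hB]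
  simp only [pow_succ, mul_neg_one, sum_neg_distrib]
  rw [sum_powerset_filter_image_fst_snd_neg_one_pow_card (mem_simplices.1 hA).1
    (mem_simplices.1 hB).1]
  ring
end

section
/- Cancellation in the additive Zykov monoid: for finite simple graphs G, H, K, if the Zykov join G + K is isomorphic to the Zykov join H + K, then G is isomorphic to H. -/
/-!
Non-adjacency in `G + K` only relates vertices lying in the same summand. Given an
isomorphism `f : G + K ≃g H + K`, send a vertex `a` of `G` to `H` by the chase
`f a, f c₁, f c₂, …`, where every point `cᵢ` of `K` is fed back through `f`; it reaches `H`
because `K` is finite and the chase cannot revisit a point of `K`. The chase for `f⁻¹`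
undoes it, so this is a bijection. If `a` and `a'` are non-adjacent, so are their chases at
every step; in particular they lie in the same summand at every step, so both chases leave
`K` together and the images are non-adjacent in `H`. Applied to `f⁻¹` this gives the converse.
-/

variable {V W U : Type*}

namespace Equiv

variable {α β γ : Type*} (e : α ⊕ γ ≃ β ⊕ γ)

def sumCancelStep : β ⊕ γ → β ⊕ γ
  | .inl b => .inl b
  | .inr c => e (.inr c)

def sumCancelChase (x : α ⊕ γ) (n : ℕ) : β ⊕ γ :=
  (sumCancelStep e)^[n] (e x)

theorem sumCancelChase_succ (x : α ⊕ γ) (n : ℕ) :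
    sumCancelChase e x (n + 1) = sumCancelStep e (sumCancelChase e x n) :=
  Function.iterate_succ_apply' _ _ _

theorem sumCancelChase_succ_of_eq_inr {x : α ⊕ γ} {c : γ} (hx : e x = .inr c) (n : ℕ) :
    sumCancelChase e x (n + 1) = sumCancelChase e (.inr c) n := by
  rw [sumCancelChase, Function.iterate_succ_apply, hx]
  rfl

theorem sumCancelChase_eq_inl_of_le {x : α ⊕ γ} {m n : ℕ} {b : β}
    (h : sumCancelChase e x m = .inl b) (hmn : m ≤ n) : sumCancelChase e x n = .inl b := by
  obtain ⟨k, rfl⟩ := Nat.exists_eq_add_of_le hmn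
  have hfix : sumCancelStep e (.inl b) = .inl b := rfl
  rw [sumCancelChase, add_comm, Function.iterate_add_apply, ← sumCancelChase, h]
  exact Function.iterate_fixed hfix k

theorem sumCancelChase_inl_unique {x : α ⊕ γ} {m n : ℕ} {b b' : β}
    (h : sumCancelChase e x m = .inl b) (h' : sumCancelChase e x n = .inl b') : b = b' :=
  Sum.inl_injective <| by
    rw [← sumCancelChase_eq_inl_of_le e h (le_max_left m n),
      ← sumCancelChase_eq_inl_of_le e h' (le_max_right m n)]

theorem exists_sumCancelChase_symm_eq {x : α ⊕ γ} {n : ℕ} {b : β}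
    (h : sumCancelChase e x n = .inl b) : ∃ m, sumCancelChase e.symm (.inl b) m = x := by
  induction n generalizing x with
  | zero => exact ⟨0, e.symm_apply_eq.mpr h.symm⟩
  | succ n ih =>
    rcases hx : e x with b' | c
    · obtain rfl : b' = b := sumCancelChase_inl_unique e (m := 0) hx h
      exact ⟨0, e.symm_apply_eq.mpr hx.symm⟩
    · obtain ⟨m, hm⟩ := ih (sumCancelChase_succ_of_eq_inr e hx n ▸ h)
      refine ⟨m + 1, ?_⟩
      rw [sumCancelChase_succ, hm]
      exact e.symm_apply_eq.mpr hx.symm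

theorem exists_sumCancelChase_eq_inl [Finite γ] (a : α) :
    ∃ b n, sumCancelChase e (.inl a) n = .inl b := by
  by_contra! hnone
  have hinr (n : ℕ) : ∃ c, sumCancelChase e (.inl a) n = .inr c := by
    rcases hn : sumCancelChase e (.inl a) n with b | c
    · exact absurd hn (hnone b n)
    · exact ⟨c, rfl⟩
  choose u hu using hinr
  have hsucc (n : ℕ) : sumCancelChase e (.inl a) (n + 1) = e (.inr (u n)) := by
    rw [sumCancelChase_succ, hu]; rfl
  -- Before reaching `β` the chase cannot revisit a point, since `e` is injective and
  -- its starting point `e (inl a)` is not of the form `e (inr c)`.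
  have hne (i k : ℕ) : u i ≠ u (i + k + 1) := by
    induction i with
    | zero =>
      intro h
      have : sumCancelChase e (.inl a) 0 = sumCancelChase e (.inl a) (k + 1) := by
        rw [hu, hu, h, zero_add]
      rw [hsucc] at this
      exact Sum.inl_ne_inr (e.injective this)
    | succ i ih =>
      intro h
      have : sumCancelChase e (.inl a) (i + 1) = sumCancelChase e (.inl a) (i + k + 1 + 1) := by
        rw [hu, hu, h, show i + 1 + k + 1 = i + k + 1 + 1 by omega]
      rw [hsucc, hsucc] at this
      exact ih (Sum.inr_injective (e.injective this))
  refine not_injective_infinite_finite u fun i j hij => ?_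
  by_contra hij'
  rcases Nat.lt_or_gt_of_ne hij' with hlt | hlt
  · obtain ⟨k, rfl⟩ := Nat.exists_eq_add_of_lt hlt
    exact hne i k hij
  · obtain ⟨k, rfl⟩ := Nat.exists_eq_add_of_lt hlt
    exact hne j k hij.symm

noncomputable def sumCancel [Finite γ] (a : α) : β :=
  (exists_sumCancelChase_eq_inl e a).choose

theorem exists_sumCancelChase_eq_sumCancel [Finite γ] (a : α) :
    ∃ n, sumCancelChase e (.inl a) n = .inl (sumCancel e a) :=
  (exists_sumCancelChase_eq_inl e a).choose_spec

theorem sumCancel_eq_of_sumCancelChase_eq [Finite γ] {a : α} {n : ℕ} {b : β}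
    (h : sumCancelChase e (.inl a) n = .inl b) : sumCancel e a = b :=
  let ⟨_, hn⟩ := exists_sumCancelChase_eq_sumCancel e a
  sumCancelChase_inl_unique e hn h

theorem sumCancel_symm_sumCancel [Finite γ] (a : α) :
    sumCancel e.symm (sumCancel e a) = a :=
  let ⟨_, hn⟩ := exists_sumCancelChase_eq_sumCancel e a
  let ⟨_, hm⟩ := exists_sumCancelChase_symm_eq e hn
  sumCancel_eq_of_sumCancelChase_eq e.symm hm

noncomputable def sumCancelEquiv [Finite γ] : α ≃ β where
  toFun := sumCancel e
  invFun := sumCancel e.symm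
  left_inv := sumCancel_symm_sumCancel e
  right_inv := sumCancel_symm_sumCancel e.symm

section Rel

variable {r : α ⊕ γ → α ⊕ γ → Prop} {s : β ⊕ γ → β ⊕ γ → Prop}

theorem rel_sumCancelChase (he : ∀ x y, r x y → s (e x) (e y))
    (hs : ∀ x y, s x y → x.isLeft = y.isLeft)
    (hsr : ∀ c c', s (.inr c) (.inr c') → r (.inr c) (.inr c'))
    {x y : α ⊕ γ} (h : r x y) (n : ℕ) : s (sumCancelChase e x n) (sumCancelChase e y n) := by
  induction n with
  | zero => exact he x y h
  | succ n ih =>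
    rw [sumCancelChase_succ, sumCancelChase_succ]
    rcases hx : sumCancelChase e x n with b | c <;>
      rcases hy : sumCancelChase e y n with b' | c' <;> rw [hx, hy] at ih
    · exact ih
    · exact absurd (hs _ _ ih) (by simp)
    · exact absurd (hs _ _ ih) (by simp)
    · exact he _ _ (hsr _ _ ih)

theorem rel_sumCancel [Finite γ] (he : ∀ x y, r x y → s (e x) (e y))
    (hs : ∀ x y, s x y → x.isLeft = y.isLeft)
    (hsr : ∀ c c', s (.inr c) (.inr c') → r (.inr c) (.inr c'))
    {a a' : α} (h : r (.inl a) (.inl a')) :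
    s (.inl (sumCancel e a)) (.inl (sumCancel e a')) := by
  obtain ⟨m, hm⟩ := exists_sumCancelChase_eq_sumCancel e a
  obtain ⟨n, hn⟩ := exists_sumCancelChase_eq_sumCancel e a'
  rw [← sumCancelChase_eq_inl_of_le e hm (le_max_left m n),
    ← sumCancelChase_eq_inl_of_le e hn (le_max_right m n)]
  exact rel_sumCancelChase e he hs hsr h _

end Rel

end Equiv

section ZykovJoin

variable {G : SimpleGraph V} {H : SimpleGraph W} {K : SimpleGraph U}

theorem zykovJoin_isLeft_eq_of_not_adj {x y : V ⊕ U} (h : ¬ (zykovJoin G K).Adj x y) :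
    x.isLeft = y.isLeft := by
  rcases x with a | c <;> rcases y with b | d <;> first | rfl | exact absurd trivial h

theorem SimpleGraph.Iso.not_adj_sumCancel [Finite U] (f : zykovJoin G K ≃g zykovJoin H K)
    {a a' : V} (h : ¬ G.Adj a a') : ¬ H.Adj (f.toEquiv.sumCancel a) (f.toEquiv.sumCancel a') :=
  Equiv.rel_sumCancel f.toEquiv (r := fun x y => ¬ (zykovJoin G K).Adj x y)
    (s := fun x y => ¬ (zykovJoin H K).Adj x y) (fun _ _ => mt f.map_adj_iff.mp)
    (fun _ _ => zykovJoin_isLeft_eq_of_not_adj) (fun _ _ => id) h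

noncomputable def SimpleGraph.Iso.zykovJoinCancel [Finite U]
    (f : zykovJoin G K ≃g zykovJoin H K) : G ≃g H where
  toEquiv := f.toEquiv.sumCancelEquiv
  map_rel_iff' {a a'} := by
    refine ⟨not_imp_not.mp f.not_adj_sumCancel, fun hG => by_contra fun hH => ?_⟩
    have := f.symm.not_adj_sumCancel (a := f.toEquiv.sumCancel a) (a' := f.toEquiv.sumCancel a') hH
    rw [show f.symm.toEquiv = f.toEquiv.symm from rfl, Equiv.sumCancel_symm_sumCancel,
      Equiv.sumCancel_symm_sumCancel] at this
    exact this hG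

end ZykovJoin

theorem zykovJoin_cancel_general [Fintype U]
    (G : SimpleGraph V) (H : SimpleGraph W) (K : SimpleGraph U)
    (h : Nonempty (zykovJoin G K ≃g zykovJoin H K)) : Nonempty (G ≃g H) :=
  h.map SimpleGraph.Iso.zykovJoinCancel

/-- Cancellation in the additive Zykov monoid: if `G + K ≅ H + K`
then `G ≅ H`. -/
theorem zykovJoin_cancel [Fintype V] [Fintype W] [Fintype U]
    (G : SimpleGraph V) (H : SimpleGraph W) (K : SimpleGraph U)
    (h : Nonempty (zykovJoin G K ≃g zykovJoin H K)) : Nonempty (G ≃g H) :=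
  zykovJoin_cancel_general G H K h
end
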